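/- Let (Ω, 𝓕, π) be a σ-finite measure space and let ν₀, ν₁ be probability measures with densities f₀ = dν₀/dπ, f₁ = dν₁/dπ, such that ν₁ ≪ ν₀ and ν₁(Ω) > 0. For β ≥ 0 set C_β := ∫ f₀^{1/(1+β)} f₁^{β/(1+β)} dπ and f*_β := C_β⁻¹ f₀^{1/(1+β)} f₁^{β/(1+β)}. Then f*_β(x) converges to f₁(x)/ν₁(Ω) for π-almost every x as β → ∞. -/

import Mathlib

open MeasureTheory
open scoped Classical ENNReal

/-- Kullback–Leibler divergence: `D_KL(μ, ν) = ∫ log(dμ/dν) dμ` if `μ ≪ ν` (and the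
log-likelihood ratio is integrable), and `∞` otherwise. Valued in `EReal = (-∞, ∞]`. -/
noncomputable def klDiv {Ω : Type*} [MeasurableSpace Ω] (μ ν : Measure Ω) : EReal :=
  if μ ≪ ν ∧ Integrable (llr μ ν) μ then ((∫ x, llr μ ν x ∂μ : ℝ) : EReal) else ⊤

/-- The normalizing constant `C_β = ∫ f₀^{1/(1+β)} f₁^{β/(1+β)} dπ` of the geometric mixture. -/
noncomputable def geomConst {Ω : Type*} [MeasurableSpace Ω] (π : Measure Ω)
    (f₀ f₁ : Ω → ℝ≥0∞) (β : ℝ) : ℝ≥0∞ :=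
  ∫⁻ x, f₀ x ^ (1 / (1 + β)) * f₁ x ^ (β / (1 + β)) ∂π

/-- The geometric-mixture measure `μ*_β` with `dμ*_β/dπ = C_β⁻¹ f₀^{1/(1+β)} f₁^{β/(1+β)}`. -/
noncomputable def geomMix {Ω : Type*} [MeasurableSpace Ω] (π : Measure Ω)
    (f₀ f₁ : Ω → ℝ≥0∞) (β : ℝ) : Measure Ω :=
  π.withDensity fun x => (geomConst π f₀ f₁ β)⁻¹ * (f₀ x ^ (1 / (1 + β)) * f₁ x ^ (β / (1 + β)))

/-!
Where `f₀` and `f₁` are finite and `f₀ = 0` forces `f₁ = 0` (absolute continuity), the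
geometric weight `f₀ ^ (1/(1+β)) * f₁ ^ (β/(1+β))` tends to `f₁` as `β → ∞`. Weighted AM–GM
bounds it by the integrable `f₀ + f₁`, so dominated convergence gives `C_β → ∫ f₁ dπ = 1`.
-/

open Filter Topology

lemma tendsto_one_div_one_add_atTop :
    Tendsto (fun β : ℝ => 1 / (1 + β)) atTop (𝓝 0) :=
  tendsto_const_nhds.div_atTop (tendsto_atTop_add_const_left atTop 1 tendsto_id)

lemma tendsto_div_one_add_atTop :
    Tendsto (fun β : ℝ => β / (1 + β)) atTop (𝓝 1) := by
  have h := (tendsto_const_nhds (x := (1 : ℝ))).sub tendsto_one_div_one_add_atTop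
  rw [sub_zero] at h
  refine h.congr' ?_
  filter_upwards [eventually_gt_atTop 0] with β hβ
  field_simp
  ring

namespace ENNReal

lemma tendsto_const_rpow {α : Type*} {l : Filter α} {x : ℝ≥0∞} (hx₀ : x ≠ 0) (hx : x ≠ ⊤)
    {v : α → ℝ} {y : ℝ} (hv : Tendsto v l (𝓝 y)) :
    Tendsto (fun t => x ^ v t) l (𝓝 (x ^ y)) := by
  lift x to NNReal using hx
  have hx₀' : x ≠ 0 := by simpa using hx₀
  simp_rw [← ENNReal.coe_rpow_of_ne_zero hx₀']
  exact ENNReal.tendsto_coe.2 (tendsto_const_nhds.nnrpow hv (Or.inl hx₀'))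

lemma rpow_mul_rpow_le_add (a b : ℝ≥0∞) {p q : ℝ} (hp : 0 ≤ p) (hq : 0 ≤ q) (hpq : p + q = 1) :
    a ^ p * b ^ q ≤ a + b :=
  calc a ^ p * b ^ q ≤ max a b ^ p * max a b ^ q :=
        mul_le_mul' (rpow_le_rpow (le_max_left a b) hp) (rpow_le_rpow (le_max_right a b) hq)
    _ = max a b := by rw [← rpow_add_of_nonneg _ _ hp hq, hpq, rpow_one]
    _ ≤ a + b := max_le le_self_add le_add_self

end ENNReal

lemma geomWeight_le_add (a b : ℝ≥0∞) {β : ℝ} (hβ : 0 ≤ β) :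
    a ^ (1 / (1 + β)) * b ^ (β / (1 + β)) ≤ a + b := by
  have h : (0 : ℝ) < 1 + β := by linarith
  exact ENNReal.rpow_mul_rpow_le_add a b (by positivity) (by positivity) (by field_simp)

lemma tendsto_geomWeight {a b : ℝ≥0∞} (ha : a ≠ ⊤) (hb : b ≠ ⊤) (hab : b ≠ 0 → a ≠ 0) :
    Tendsto (fun β : ℝ => a ^ (1 / (1 + β)) * b ^ (β / (1 + β))) atTop (𝓝 b) := by
  rcases eq_or_ne b 0 with rfl | hb₀
  · refine tendsto_const_nhds.congr' ?_
    filter_upwards [eventually_gt_atTop 0] with β hβ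
    rw [ENNReal.zero_rpow_of_pos (by positivity), mul_zero]
  · have ha' := ENNReal.tendsto_const_rpow (hab hb₀) ha tendsto_one_div_one_add_atTop
    have hb' := ENNReal.tendsto_const_rpow hb₀ hb tendsto_div_one_add_atTop
    rw [ENNReal.rpow_zero] at ha'
    rw [ENNReal.rpow_one] at hb'
    simpa using ENNReal.Tendsto.mul ha' (Or.inl one_ne_zero) hb' (Or.inr ENNReal.one_ne_top)

namespace MeasureTheory

variable {Ω : Type*} [MeasurableSpace Ω] {π : Measure Ω} {f₀ f₁ : Ω → ℝ≥0∞}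

lemma ae_ne_zero_of_withDensity_absolutelyContinuous (hf₀ : Measurable f₀)
    (hf₁ : Measurable f₁) (h : π.withDensity f₁ ≪ π.withDensity f₀) :
    ∀ᵐ x ∂π, f₁ x ≠ 0 → f₀ x ≠ 0 :=
  (ae_withDensity_iff hf₁).1 (h.ae_le ((ae_withDensity_iff hf₀).2 (ae_of_all _ fun _ => id)))

lemma ae_tendsto_geomWeight (hf₀ : Measurable f₀) (hf₁ : Measurable f₁)
    (hI₀ : ∫⁻ x, f₀ x ∂π ≠ ⊤) (hI₁ : ∫⁻ x, f₁ x ∂π ≠ ⊤) (h01 : ∀ᵐ x ∂π, f₁ x ≠ 0 → f₀ x ≠ 0) :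
    ∀ᵐ x ∂π, Tendsto (fun β : ℝ => f₀ x ^ (1 / (1 + β)) * f₁ x ^ (β / (1 + β))) atTop
      (𝓝 (f₁ x)) := by
  filter_upwards [ae_lt_top hf₀ hI₀, ae_lt_top hf₁ hI₁, h01] with x h₀ h₁ hx
  exact tendsto_geomWeight h₀.ne h₁.ne hx

lemma tendsto_geomConst (hf₀ : Measurable f₀) (hf₁ : Measurable f₁)
    (hI₀ : ∫⁻ x, f₀ x ∂π ≠ ⊤) (hI₁ : ∫⁻ x, f₁ x ∂π ≠ ⊤) (h01 : ∀ᵐ x ∂π, f₁ x ≠ 0 → f₀ x ≠ 0) :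
    Tendsto (geomConst π f₀ f₁) atTop (𝓝 (∫⁻ x, f₁ x ∂π)) := by
  refine tendsto_lintegral_filter_of_dominated_convergence (fun x => f₀ x + f₁ x)
    (Eventually.of_forall fun β => ?_) ?_ ?_ (ae_tendsto_geomWeight hf₀ hf₁ hI₀ hI₁ h01)
  · exact (hf₀.pow_const _).mul (hf₁.pow_const _)
  · filter_upwards [eventually_ge_atTop 0] with β hβ
    exact ae_of_all _ fun x => geomWeight_le_add _ _ hβ
  · rw [lintegral_add_left hf₀]
    exact ENNReal.add_ne_top.2 ⟨hI₀, hI₁⟩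

lemma lintegral_eq_one_of_withDensity {ν : Measure Ω} [IsProbabilityMeasure ν] {f : Ω → ℝ≥0∞}
    (hν : ν = π.withDensity f) : ∫⁻ x, f x ∂π = 1 := by
  rw [← setLIntegral_univ, ← withDensity_apply _ MeasurableSet.univ, ← hν, measure_univ]

end MeasureTheory

open MeasureTheory

theorem stmt7_general {Ω : Type*} [MeasurableSpace Ω] (π ν₀ ν₁ : Measure Ω)
    [IsProbabilityMeasure ν₀] [IsProbabilityMeasure ν₁]
    (f₀ f₁ : Ω → ℝ≥0∞) (hf₀ : Measurable f₀) (hf₁ : Measurable f₁)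
    (hν₀ : ν₀ = π.withDensity f₀) (hν₁ : ν₁ = π.withDensity f₁)
    (h01 : ν₁ ≪ ν₀) :
    ∀ᵐ x ∂π, Filter.Tendsto
      (fun β : ℝ => (geomConst π f₀ f₁ β)⁻¹ * (f₀ x ^ (1 / (1 + β)) * f₁ x ^ (β / (1 + β))))
      Filter.atTop (nhds (f₁ x / ν₁ Set.univ)) := by
  have hI₀ : ∫⁻ x, f₀ x ∂π ≠ ⊤ := by simp [lintegral_eq_one_of_withDensity hν₀]
  have hI₁ := lintegral_eq_one_of_withDensity hν₁
  have hI₁' : ∫⁻ x, f₁ x ∂π ≠ ⊤ := by simp [hI₁]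
  have hne : ∀ᵐ x ∂π, f₁ x ≠ 0 → f₀ x ≠ 0 :=
    ae_ne_zero_of_withDensity_absolutelyContinuous hf₀ hf₁ (hν₀ ▸ hν₁ ▸ h01)
  have hC := tendsto_geomConst hf₀ hf₁ hI₀ hI₁' hne
  rw [hI₁] at hC
  have hCinv : Tendsto (fun β => (geomConst π f₀ f₁ β)⁻¹) atTop (𝓝 1) := by
    simpa using tendsto_inv_iff.2 hC
  filter_upwards [ae_tendsto_geomWeight hf₀ hf₁ hI₀ hI₁' hne] with x hx
  rw [measure_univ, div_one]
  simpa using ENNReal.Tendsto.mul hCinv (Or.inl one_ne_zero) hx (Or.inr ENNReal.one_ne_top)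

theorem stmt7 {Ω : Type*} [MeasurableSpace Ω] (π ν₀ ν₁ : Measure Ω) [SigmaFinite π]
    [IsProbabilityMeasure ν₀] [IsProbabilityMeasure ν₁]
    (f₀ f₁ : Ω → ℝ≥0∞) (hf₀ : Measurable f₀) (hf₁ : Measurable f₁)
    (hν₀ : ν₀ = π.withDensity f₀) (hν₁ : ν₁ = π.withDensity f₁)
    (h01 : ν₁ ≪ ν₀) (hν₁0 : ν₁ Set.univ ≠ 0) :
    ∀ᵐ x ∂π, Filter.Tendsto
      (fun β : ℝ => (geomConst π f₀ f₁ β)⁻¹ * (f₀ x ^ (1 / (1 + β)) * f₁ x ^ (β / (1 + β))))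
      Filter.atTop (nhds (f₁ x / ν₁ Set.univ)) :=
  stmt7_general π ν₀ ν₁ f₀ f₁ hf₀ hf₁ hν₀ hν₁ h01
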